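/- arXiv:2212.14269 — 2 statements merged into one kernel-verified Lean document; each statement's English description precedes it below -/
import Mathlib

section
/- Let μ > 0 and λ ∈ ℝ. For every ε > 0 and every finitely supported sequence a : ℕ → ℂ with a_0 = 0, the following fundamental inequality holds: (μ − ε) · (∑_{n=0}^∞ n²·|a_n|²)^{1/2} ≤ ‖H_{μ,λ}a‖ + (λ²/(4ε)) · ‖a‖. -/
/-- The Gribov matrix `H_{μ,λ}` acting on sequences:
`(Ha)₀ = 0` and `(Ha)ₙ = iλ(n−1)√n·a_{n−1} + μn·aₙ + iλn√(n+1)·a_{n+1}` for `n ≥ 1`. -/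
noncomputable def gribovH (μ lam : ℝ) (a : ℕ → ℂ) : ℕ → ℂ := fun n =>
  if n = 0 then 0 else
    Complex.I * (lam : ℂ) * ((n - 1 : ℕ) : ℂ) * (Real.sqrt n : ℂ) * a (n - 1)
      + (μ : ℂ) * (n : ℂ) * a n
      + Complex.I * (lam : ℂ) * (n : ℂ) * (Real.sqrt (n + 1) : ℂ) * a (n + 1)

/-- The ℓ²-norm of a sequence. -/
noncomputable def l2norm (a : ℕ → ℂ) : ℝ := Real.sqrt (∑' n, ‖a n‖ ^ 2)

/-!
Write `N = A*A` and `H = μN + iλB`, where `B` is the real symmetric tridiagonal part. Pairing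
`Ha` with `Na`, the real part of `⟨iλBa, Na⟩` telescopes, because `N` and `B` nearly commute, to
`∑ Re wₙ` with `|wₙ| = |λ|·(n|aₙ|)·(√(n+1)|aₙ₊₁|)`. Young's inequality bounds this by
`ε‖Na‖² + (λ²/4ε)∑ n|aₙ|²`, and `∑ n|aₙ|² ≤ ‖Na‖‖a‖` by Cauchy–Schwarz. Hence
`μ‖Na‖² ≤ ‖Ha‖‖Na‖ + ε‖Na‖² + (λ²/4ε)‖Na‖‖a‖`, and one divides by `‖Na‖`.
-/

open Finset ComplexConjugate

theorem Finset.sum_range_shift_of_eq_zero {M : Type*} [AddCommMonoid M] {f : ℕ → M} {K : ℕ}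
    (h0 : f 0 = 0) (hK : f K = 0) : ∑ n ∈ range K, f (n + 1) = ∑ n ∈ range K, f n := by
  have h := sum_range_succ' f K
  rw [sum_range_succ, hK, h0, add_zero, add_zero] at h
  exact h.symm

theorem tsum_eq_sum_range_of_forall_ge {M : Type*} [AddCommMonoid M] [TopologicalSpace M]
    {f : ℕ → M} {K : ℕ} (hf : ∀ n, K ≤ n → f n = 0) :
    ∑' n, f n = ∑ n ∈ range K, f n :=
  tsum_eq_sum fun n hn => hf n (by simpa using hn)

theorem abs_mul_mul_le_mul_sq_add_div_mul_sq {ε : ℝ} (hε : 0 < ε) (lam u v : ℝ) :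
    |lam| * (u * v) ≤ ε * u ^ 2 + lam ^ 2 / (4 * ε) * v ^ 2 := by
  rw [← sub_nonneg, show ε * u ^ 2 + lam ^ 2 / (4 * ε) * v ^ 2 - |lam| * (u * v)
      = (2 * ε * u - |lam| * v) ^ 2 / (4 * ε) by
    rw [← sq_abs lam]; field_simp; ring]
  positivity

theorem mul_le_of_mul_mul_self_le {t x b : ℝ} (hx : 0 ≤ x) (hb : 0 ≤ b)
    (h : t * x * x ≤ b * x) : t * x ≤ b := by
  rcases hx.eq_or_lt with rfl | hx
  · simpa using hb
  · exact le_of_mul_le_mul_right h hx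

theorem l2norm_eq_sqrt_sum_range {f : ℕ → ℂ} {K : ℕ} (hf : ∀ n, K ≤ n → f n = 0) :
    l2norm f = Real.sqrt (∑ n ∈ range K, ‖f n‖ ^ 2) := by
  rw [l2norm, tsum_eq_sum_range_of_forall_ge fun n hn => by simp [hf n hn]]

section Gribov

variable (μ lam : ℝ) (a : ℕ → ℂ)

/-- The products `wₙ` whose real parts make up `Re ⟨H a, A*A a⟩ - μ ‖A*A a‖²`. -/
noncomputable def gribovCoupling (n : ℕ) : ℂ :=
  Complex.I * lam * n * (Real.sqrt (n + 1) : ℂ) * a n * conj (a (n + 1))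

theorem re_gribovH_mul_conj (n : ℕ) :
    (gribovH μ lam a n * conj (n * a n)).re =
      μ * n ^ 2 * ‖a n‖ ^ 2 + n * (gribovCoupling lam a (n - 1)).re
        - n * (gribovCoupling lam a n).re := by
  rcases n with _ | m
  · simp [gribovH]
  have hw : gribovH μ lam a (m + 1) * conj ((m + 1 : ℕ) * a (m + 1)) =
      (μ * (m + 1 : ℕ) ^ 2 : ℝ) * (a (m + 1) * conj (a (m + 1)))
        + ((m + 1 : ℕ) : ℝ) * gribovCoupling lam a m
        - ((m + 1 : ℕ) : ℝ) * conj (gribovCoupling lam a (m + 1)) := by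
    simp only [gribovH, gribovCoupling, if_neg m.succ_ne_zero, Nat.add_sub_cancel, map_mul,
      map_natCast, Complex.conj_I, Complex.conj_ofReal, Complex.conj_conj]
    push_cast
    ring
  rw [hw, Complex.mul_conj, Nat.add_sub_cancel]
  simp only [Complex.sub_re, Complex.add_re, Complex.re_ofReal_mul, Complex.conj_re,
    Complex.ofReal_re, Complex.normSq_eq_norm_sq]

theorem norm_gribovCoupling (n : ℕ) :
    ‖gribovCoupling lam a n‖ = |lam| * ((n * ‖a n‖) * (Real.sqrt (n + 1) * ‖a (n + 1)‖)) := by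
  simp only [gribovCoupling, norm_mul, Complex.norm_I, Complex.norm_natCast, Complex.norm_conj,
    Complex.norm_real, Real.norm_eq_abs, abs_of_nonneg (Real.sqrt_nonneg _)]
  ring

theorem abs_re_gribovCoupling_le {ε : ℝ} (hε : 0 < ε) (n : ℕ) :
    |(gribovCoupling lam a n).re| ≤
      ε * (n ^ 2 * ‖a n‖ ^ 2) + lam ^ 2 / (4 * ε) * ((n + 1) * ‖a (n + 1)‖ ^ 2) := by
  calc |(gribovCoupling lam a n).re| ≤ ‖gribovCoupling lam a n‖ := Complex.abs_re_le_norm _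
    _ ≤ ε * (n * ‖a n‖) ^ 2 + lam ^ 2 / (4 * ε) * (Real.sqrt (n + 1) * ‖a (n + 1)‖) ^ 2 :=
      (norm_gribovCoupling lam a n).trans_le (abs_mul_mul_le_mul_sq_add_div_mul_sq hε _ _ _)
    _ = _ := by rw [mul_pow, mul_pow, Real.sq_sqrt (by positivity)]

theorem gribovH_eq_zero_of_ge {N : ℕ} (ha : ∀ n, N ≤ n → a n = 0) (n : ℕ) (hn : N + 1 ≤ n) :
    gribovH μ lam a n = 0 := by
  simp [gribovH, ha (n - 1) (by omega), ha n (by omega), ha (n + 1) (by omega)]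

theorem re_sum_gribovH_mul_conj {N : ℕ} (ha : ∀ n, N ≤ n → a n = 0) :
    (∑ n ∈ range (N + 1), gribovH μ lam a n * conj (n * a n)).re =
      μ * ∑ n ∈ range (N + 1), (n : ℝ) ^ 2 * ‖a n‖ ^ 2
        + ∑ n ∈ range (N + 1), (gribovCoupling lam a n).re := by
  have hshift : ∑ n ∈ range (N + 1), (n : ℝ) * (gribovCoupling lam a (n - 1)).re =
      ∑ n ∈ range (N + 1), ((n : ℝ) + 1) * (gribovCoupling lam a n).re := by
    rw [← sum_range_shift_of_eq_zero
      (f := fun n : ℕ => (n : ℝ) * (gribovCoupling lam a (n - 1)).re) (by simp)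
      (by simp [gribovCoupling, ha N le_rfl])]
    simp
  simp only [Complex.re_sum, re_gribovH_mul_conj, sum_sub_distrib, sum_add_distrib, hshift,
    mul_sum]
  simp only [add_mul, one_mul, sum_add_distrib, mul_assoc]
  ring

theorem sum_abs_re_gribovCoupling_le {N : ℕ} (ha : ∀ n, N ≤ n → a n = 0) {ε : ℝ} (hε : 0 < ε) :
    ∑ n ∈ range (N + 1), |(gribovCoupling lam a n).re| ≤
      ε * ∑ n ∈ range (N + 1), (n : ℝ) ^ 2 * ‖a n‖ ^ 2 + lam ^ 2 / (4 * ε) *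
        (Real.sqrt (∑ n ∈ range (N + 1), (n : ℝ) ^ 2 * ‖a n‖ ^ 2)
          * Real.sqrt (∑ n ∈ range (N + 1), ‖a n‖ ^ 2)) := by
  have hshift : ∑ n ∈ range (N + 1), ((n : ℝ) + 1) * ‖a (n + 1)‖ ^ 2 =
      ∑ n ∈ range (N + 1), (n : ℝ) * ‖a n‖ ^ 2 := by
    simpa using sum_range_shift_of_eq_zero (f := fun n : ℕ => (n : ℝ) * ‖a n‖ ^ 2)
      (by simp) (by simp [ha (N + 1) (by omega)])
  have hcs : ∑ n ∈ range (N + 1), (n : ℝ) * ‖a n‖ ^ 2 ≤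
      Real.sqrt (∑ n ∈ range (N + 1), (n : ℝ) ^ 2 * ‖a n‖ ^ 2)
        * Real.sqrt (∑ n ∈ range (N + 1), ‖a n‖ ^ 2) := by
    simpa only [mul_pow, mul_assoc, ← sq] using
      Real.sum_mul_le_sqrt_mul_sqrt (range (N + 1)) (fun n => (n : ℝ) * ‖a n‖) (fun n => ‖a n‖)
  calc ∑ n ∈ range (N + 1), |(gribovCoupling lam a n).re|
      ≤ ∑ n ∈ range (N + 1), (ε * ((n : ℝ) ^ 2 * ‖a n‖ ^ 2)
          + lam ^ 2 / (4 * ε) * (((n : ℝ) + 1) * ‖a (n + 1)‖ ^ 2)) :=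
        sum_le_sum fun n _ => abs_re_gribovCoupling_le lam a hε n
    _ = ε * ∑ n ∈ range (N + 1), (n : ℝ) ^ 2 * ‖a n‖ ^ 2
          + lam ^ 2 / (4 * ε) * ∑ n ∈ range (N + 1), (n : ℝ) * ‖a n‖ ^ 2 := by
        rw [sum_add_distrib, ← mul_sum, ← mul_sum, hshift]
    _ ≤ _ := by gcongr

theorem re_sum_gribovH_mul_conj_le (N : ℕ) :
    (∑ n ∈ range (N + 1), gribovH μ lam a n * conj (n * a n)).re ≤
      Real.sqrt (∑ n ∈ range (N + 1), ‖gribovH μ lam a n‖ ^ 2)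
        * Real.sqrt (∑ n ∈ range (N + 1), (n : ℝ) ^ 2 * ‖a n‖ ^ 2) := by
  calc _ ≤ ‖∑ n ∈ range (N + 1), gribovH μ lam a n * conj (n * a n)‖ := Complex.re_le_norm _
    _ ≤ ∑ n ∈ range (N + 1), ‖gribovH μ lam a n‖ * ((n : ℝ) * ‖a n‖) := by
        refine (norm_sum_le _ _).trans_eq (sum_congr rfl fun n _ => ?_)
        rw [norm_mul, Complex.norm_conj, norm_mul, Complex.norm_natCast]
    _ ≤ _ := by
        simpa only [mul_pow] using Real.sum_mul_le_sqrt_mul_sqrt (range (N + 1))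
          (fun n => ‖gribovH μ lam a n‖) (fun n => (n : ℝ) * ‖a n‖)

theorem gribovH_fundamental_inequality_of_forall_ge {ε : ℝ} (hε : 0 < ε) {N : ℕ}
    (ha : ∀ n, N ≤ n → a n = 0) :
    (μ - ε) * Real.sqrt (∑ n ∈ range (N + 1), (n : ℝ) ^ 2 * ‖a n‖ ^ 2) ≤
      Real.sqrt (∑ n ∈ range (N + 1), ‖gribovH μ lam a n‖ ^ 2)
        + lam ^ 2 / (4 * ε) * Real.sqrt (∑ n ∈ range (N + 1), ‖a n‖ ^ 2) := by
  have hre := re_sum_gribovH_mul_conj μ lam a ha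
  have hle := re_sum_gribovH_mul_conj_le μ lam a N
  have habs := (neg_le_abs _).trans (abs_sum_le_sum_abs (fun n => (gribovCoupling lam a n).re)
    (range (N + 1))) |>.trans (sum_abs_re_gribovCoupling_le lam a ha hε)
  set P := ∑ n ∈ range (N + 1), (n : ℝ) ^ 2 * ‖a n‖ ^ 2
  have hP : Real.sqrt P * Real.sqrt P = P := Real.mul_self_sqrt (by positivity)
  refine mul_le_of_mul_mul_self_le (Real.sqrt_nonneg _) (by positivity) ?_
  rw [mul_assoc, hP]
  linarith

end Gribov

theorem gribovH_fundamental_inequality_general (μ lam : ℝ)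
    (ε : ℝ) (hε : 0 < ε) (a : ℕ → ℂ) (hfin : (Function.support a).Finite) :
    (μ - ε) * Real.sqrt (∑' n : ℕ, (n : ℝ) ^ 2 * ‖a n‖ ^ 2) ≤
      l2norm (gribovH μ lam a) + (lam ^ 2 / (4 * ε)) * l2norm a := by
  obtain ⟨N, hN⟩ := hfin.bddAbove
  have ha : ∀ n, N + 1 ≤ n → a n = 0 := fun n hn =>
    Function.notMem_support.1 fun h => by have := hN h; omega
  rw [tsum_eq_sum_range_of_forall_ge (K := N + 2) fun n hn => by simp [ha n (by omega)],
    l2norm_eq_sqrt_sum_range (K := N + 2) (gribovH_eq_zero_of_ge μ lam a ha),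
    l2norm_eq_sqrt_sum_range (K := N + 2) fun n hn => ha n (by omega)]
  exact gribovH_fundamental_inequality_of_forall_ge μ lam a hε ha

/-- The fundamental inequality: for `μ > 0`, every `ε > 0` and every finitely
supported sequence `a`,
`(μ − ε)·‖A*A a‖ ≤ ‖H_{μ,λ} a‖ + (λ²/(4ε))·‖a‖`, where
`‖A*A a‖ = (∑ n²|aₙ|²)^{1/2}` is the norm of the number-operator image of `a`. -/
theorem gribovH_fundamental_inequality (μ lam : ℝ) (hμ : 0 < μ)
    (ε : ℝ) (hε : 0 < ε) (a : ℕ → ℂ) (hfin : (Function.support a).Finite) :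
    (μ - ε) * Real.sqrt (∑' n : ℕ, (n : ℝ) ^ 2 * ‖a n‖ ^ 2) ≤
      l2norm (gribovH μ lam a) + (lam ^ 2 / (4 * ε)) * l2norm a :=
  gribovH_fundamental_inequality_general μ lam ε hε a hfin
end

section
/- Let μ, λ ∈ ℝ. For every ε > 0 there exists a constant C_ε > 0 such that for every finitely supported sequence a : ℕ → ℂ, ‖H_{μ,λ}a‖ ≤ ε · ‖Ga‖ + C_ε · ‖a‖, i.e. the Gribov operator H_{μ,λ} is G-compact (relatively compact with respect to G = A*³A³). -/
/-- The diagonal matrix of `G = A*³A³`: `(Ga)ₙ = n(n−1)(n−2)·aₙ`. -/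
noncomputable def gOp (a : ℕ → ℂ) : ℕ → ℂ := fun n =>
  ((n * (n - 1) * (n - 2) : ℕ) : ℂ) * a n

/-!
The three nonzero entries in row `n` of `H_{μ,λ}` are `O(n^{3/2})`; bounding each by the weight
`k (k + 1)` at its column `k` gives `‖Ha‖² ≤ 3 (2λ² + μ²) ∑ₖ (k (k + 1) |aₖ|)²`. Since
`(k (k + 1))²` has degree 4 and the squared diagonal `(k (k - 1) (k - 2))²` of `G` degree 6,
`(k (k + 1))² ≤ δ (k (k - 1) (k - 2))² + C_δ` for every `δ > 0`. With
`δ = ε² / (3 (2λ² + μ²) + 1)` this gives `‖Ha‖² ≤ ε² ‖Ga‖² + C ‖a‖²`, and `√(x² + y²) ≤ x + y`.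
-/

lemma summable_of_finite_support_of_vanishing {ι M E : Type*} [Zero M] [AddCommMonoid E]
    [TopologicalSpace E] {a : ι → M} (ha : a.support.Finite) {f : ι → E}
    (hf : ∀ i, a i = 0 → f i = 0) : Summable f :=
  summable_of_hasFiniteSupport (ha.subset fun i hfi hai => hfi (hf i hai))

lemma l2norm_le_of_tsum_le {x a b : ℕ → ℂ} {s t : ℝ} (hs : 0 ≤ s) (ht : 0 ≤ t)
    (h : ∑' n, ‖x n‖ ^ 2 ≤ s ^ 2 * ∑' n, ‖a n‖ ^ 2 + t ^ 2 * ∑' n, ‖b n‖ ^ 2) :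
    l2norm x ≤ s * l2norm a + t * l2norm b := by
  have sq_l2norm (c : ℕ → ℂ) : l2norm c ^ 2 = ∑' n, ‖c n‖ ^ 2 :=
    Real.sq_sqrt (tsum_nonneg fun _ => sq_nonneg _)
  have ha : 0 ≤ l2norm a := Real.sqrt_nonneg _
  have hb : 0 ≤ l2norm b := Real.sqrt_nonneg _
  refine Real.sqrt_le_iff.2 ⟨by positivity, h.trans ?_⟩
  rw [← sq_l2norm a, ← sq_l2norm b]
  nlinarith [mul_nonneg (mul_nonneg hs ht) (mul_nonneg ha hb)]

lemma exists_sq_mul_succ_le_mul_sq_add (δ : ℝ) (hδ : 0 < δ) :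
    ∃ C > 0, ∀ n : ℕ,
      ((n : ℝ) * (n + 1)) ^ 2 ≤ δ * ((n * (n - 1) * (n - 2) : ℕ) : ℝ) ^ 2 + C := by
  obtain ⟨N, hN⟩ := exists_nat_ge (3 + 4 / δ)
  refine ⟨((N : ℝ) * (N + 1)) ^ 2 + 1, by positivity, fun n => ?_⟩
  rcases le_or_gt n N with hnN | hNn
  · have : (n : ℝ) ≤ N := by exact_mod_cast hnN
    have : ((n : ℝ) * (n + 1)) ^ 2 ≤ ((N : ℝ) * (N + 1)) ^ 2 := by gcongr
    nlinarith [sq_nonneg ((n * (n - 1) * (n - 2) : ℕ) : ℝ)]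
  · have hx : 3 + 4 / δ < (n : ℝ) := hN.trans_lt (by exact_mod_cast hNn)
    have hx3 : (3 : ℝ) ≤ n := by linarith [div_pos four_pos hδ]
    have h3 : 3 ≤ n := by exact_mod_cast hx3
    push_cast [Nat.cast_sub (by omega : 1 ≤ n), Nat.cast_sub (by omega : 2 ≤ n)]
    set x : ℝ := (n : ℝ)
    have hδx : 4 ≤ δ * (x - 2) := by
      have := (div_lt_iff₀' hδ).1 (show 4 / δ < x - 2 by linarith)
      linarith
    have hx1 : x + 1 ≤ 2 * (x - 1) := by linarith
    have hx2 : 1 ≤ x - 2 := by linarith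
    have key : (x + 1) ^ 2 ≤ δ * ((x - 1) * (x - 2)) ^ 2 :=
      calc (x + 1) ^ 2 ≤ 4 * (x - 1) ^ 2 := by nlinarith
        _ ≤ δ * (x - 2) * (x - 1) ^ 2 := by gcongr
        _ ≤ δ * (x - 2) ^ 2 * (x - 1) ^ 2 := by gcongr; nlinarith
        _ = δ * ((x - 1) * (x - 2)) ^ 2 := by ring
    nlinarith [mul_le_mul_of_nonneg_left key (sq_nonneg x)]

noncomputable def weightNorm (a : ℕ → ℂ) (n : ℕ) : ℝ := n * (n + 1) * ‖a n‖

lemma norm_gribovH_succ_le (μ lam : ℝ) (a : ℕ → ℂ) (m : ℕ) :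
    ‖gribovH μ lam a (m + 1)‖ ≤
      |lam| * weightNorm a m + |μ| * weightNorm a (m + 1) + |lam| * weightNorm a (m + 2) := by
  have hsqrt (x : ℝ) (hx : 1 ≤ x) : √x ≤ x := Real.sqrt_le_self_iff.2 (Or.inr hx)
  simp only [gribovH, Nat.add_one_ne_zero, if_false, Nat.add_sub_cancel]
  refine (norm_add₃_le ..).trans (add_le_add_three ?_ ?_ ?_) <;>
    simp only [weightNorm, norm_mul, Complex.norm_I, Complex.norm_real, Real.norm_eq_abs,
      abs_of_nonneg (Real.sqrt_nonneg _), ← Nat.cast_succ, Complex.norm_natCast] <;>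
    push_cast
  · calc _ = |lam| * (m * √(m + 1) * ‖a m‖) := by ring
      _ ≤ _ := by gcongr; exact hsqrt _ (by simp)
  · calc _ = |μ| * ((m + 1) * 1 * ‖a (m + 1)‖) := by ring
      _ ≤ _ := by gcongr; linarith [m.cast_nonneg (α := ℝ)]
  · calc _ = |lam| * ((m + 1) * √(m + 2) * ‖a (m + 2)‖) := by ring_nf
      _ ≤ _ := by gcongr <;> linarith [hsqrt (m + 2) (by linarith)]

lemma tsum_norm_sq_gribovH_le (μ lam : ℝ) {a : ℕ → ℂ} (ha : a.support.Finite) :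
    ∑' n, ‖gribovH μ lam a n‖ ^ 2 ≤ 3 * (2 * lam ^ 2 + μ ^ 2) * ∑' n, weightNorm a n ^ 2 := by
  set W : ℕ → ℝ := fun n => weightNorm a n ^ 2
  have hW : Summable W :=
    summable_of_finite_support_of_vanishing ha fun n h => by simp [W, weightNorm, h]
  have hW₁ : Summable fun n => W (n + 1) := (summable_nat_add_iff 1).2 hW
  have hW₂ : Summable fun n => W (n + 2) := (summable_nat_add_iff 2).2 hW
  have hshift (k : ℕ) : ∑' n, W (n + k) ≤ ∑' n, W n :=
    tsum_comp_le_tsum_of_inj hW (fun n => sq_nonneg _) (add_left_injective k)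
  have hpoint (m : ℕ) : ‖gribovH μ lam a (m + 1)‖ ^ 2 ≤
      3 * (lam ^ 2 * W m + μ ^ 2 * W (m + 1) + lam ^ 2 * W (m + 2)) := by
    have sq_add_add_le (p q r : ℝ) : (p + q + r) ^ 2 ≤ 3 * (p ^ 2 + q ^ 2 + r ^ 2) := by
      nlinarith [sq_nonneg (p - q), sq_nonneg (q - r), sq_nonneg (p - r)]
    calc _ ≤ (|lam| * weightNorm a m + |μ| * weightNorm a (m + 1)
          + |lam| * weightNorm a (m + 2)) ^ 2 := by gcongr; exact norm_gribovH_succ_le μ lam a m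
      _ ≤ _ := (sq_add_add_le _ _ _).trans_eq (by simp only [W, mul_pow, sq_abs])
  have hsum : Summable fun m => 3 * (lam ^ 2 * W m + μ ^ 2 * W (m + 1) + lam ^ 2 * W (m + 2)) :=
    (((hW.mul_left _).add (hW₁.mul_left _)).add (hW₂.mul_left _)).mul_left _
  have hH : Summable fun m => ‖gribovH μ lam a (m + 1)‖ ^ 2 :=
    hsum.of_nonneg_of_le (fun _ => sq_nonneg _) hpoint
  have hH₀ : gribovH μ lam a 0 = 0 := if_pos rfl
  calc _ = ∑' m, ‖gribovH μ lam a (m + 1)‖ ^ 2 := by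
        rw [tsum_eq_zero_add' (f := fun n => ‖gribovH μ lam a n‖ ^ 2) hH, hH₀]
        simp
    _ ≤ ∑' m, 3 * (lam ^ 2 * W m + μ ^ 2 * W (m + 1) + lam ^ 2 * W (m + 2)) :=
      hH.tsum_le_tsum hpoint hsum
    _ = 3 * (lam ^ 2 * ∑' m, W m + μ ^ 2 * ∑' m, W (m + 1) + lam ^ 2 * ∑' m, W (m + 2)) := by
      rw [tsum_mul_left, ((hW.mul_left _).add (hW₁.mul_left _)).tsum_add (hW₂.mul_left _),
        (hW.mul_left _).tsum_add (hW₁.mul_left _), tsum_mul_left, tsum_mul_left, tsum_mul_left]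
    _ ≤ 3 * (2 * lam ^ 2 + μ ^ 2) * ∑' n, W n := by
      nlinarith [mul_le_mul_of_nonneg_left (hshift 1) (sq_nonneg μ),
        mul_le_mul_of_nonneg_left (hshift 2) (sq_nonneg lam)]

lemma tsum_weightNorm_sq_le {δ C : ℝ}
    (hcoef : ∀ n : ℕ, ((n : ℝ) * (n + 1)) ^ 2 ≤ δ * ((n * (n - 1) * (n - 2) : ℕ) : ℝ) ^ 2 + C)
    {a : ℕ → ℂ} (ha : a.support.Finite) :
    ∑' n, weightNorm a n ^ 2 ≤ δ * ∑' n, ‖gOp a n‖ ^ 2 + C * ∑' n, ‖a n‖ ^ 2 := by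
  have hW : Summable fun n => weightNorm a n ^ 2 :=
    summable_of_finite_support_of_vanishing ha fun n h => by simp [weightNorm, h]
  have hG : Summable fun n => δ * ‖gOp a n‖ ^ 2 :=
    (summable_of_finite_support_of_vanishing ha fun n h => by simp [gOp, h]).mul_left δ
  have ha2 : Summable fun n => C * ‖a n‖ ^ 2 :=
    (summable_of_finite_support_of_vanishing ha fun n h => by simp [h]).mul_left C
  rw [← tsum_mul_left, ← tsum_mul_left, ← hG.tsum_add ha2]
  refine hW.tsum_le_tsum (fun n => ?_) (hG.add ha2)
  calc weightNorm a n ^ 2 = ((n : ℝ) * (n + 1)) ^ 2 * ‖a n‖ ^ 2 := by rw [weightNorm]; ring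
    _ ≤ (δ * ((n * (n - 1) * (n - 2) : ℕ) : ℝ) ^ 2 + C) * ‖a n‖ ^ 2 := by gcongr; exact hcoef n
    _ = δ * ‖gOp a n‖ ^ 2 + C * ‖a n‖ ^ 2 := by rw [gOp, norm_mul, Complex.norm_natCast]; ring

/-- `H_{μ,λ}` is `G`-compact: for every `ε > 0` there is `C_ε > 0` such that
`‖H_{μ,λ}a‖ ≤ ε·‖Ga‖ + C_ε·‖a‖` for all finitely supported sequences `a`. -/
theorem gribovH_relatively_compact (μ lam : ℝ) (ε : ℝ) (hε : 0 < ε) :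
    ∃ C > 0, ∀ a : ℕ → ℂ, (Function.support a).Finite →
      l2norm (gribovH μ lam a) ≤ ε * l2norm (gOp a) + C * l2norm a := by
  set K := 3 * (2 * lam ^ 2 + μ ^ 2) + 1
  have hK : 0 < K := by positivity
  obtain ⟨C, hC, hcoef⟩ := exists_sq_mul_succ_le_mul_sq_add (ε ^ 2 / K) (by positivity)
  refine ⟨√(K * C), by positivity, fun a ha => l2norm_le_of_tsum_le hε.le (Real.sqrt_nonneg _) ?_⟩
  rw [Real.sq_sqrt (by positivity)]
  calc _ ≤ K * ∑' n, weightNorm a n ^ 2 :=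
        (tsum_norm_sq_gribovH_le μ lam ha).trans (by gcongr; linarith)
    _ ≤ K * (ε ^ 2 / K * ∑' n, ‖gOp a n‖ ^ 2 + C * ∑' n, ‖a n‖ ^ 2) :=
        mul_le_mul_of_nonneg_left (tsum_weightNorm_sq_le hcoef ha) hK.le
    _ = _ := by field_simp
end
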